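/- arXiv:1708.01228 — 2 statements merged into one kernel-verified Lean document; each statement's English description precedes it below -/
import Mathlib

section
/- Let N ≥ 3 and let 1 ≤ K₁ < K₂ ≤ N−1. If a function u : ℝ^N → ℝ satisfies both u(y,z) = ũ₁(|y|,|z|) for the decomposition ℝ^N = ℝ^{K₁} × ℝ^{N−K₁} and u(y,z) = ũ₂(|y|,|z|) for the decomposition ℝ^N = ℝ^{K₂} × ℝ^{N−K₂} (for some functions ũ₁, ũ₂ on [0,∞)²), then u is radial, i.e., |x| = |x'| implies u(x) = u(x'). -/
/-- Norm of the first `K` coordinates of `x ∈ ℝ^N`. -/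
noncomputable def blockNorm (N K : ℕ) (x : EuclideanSpace ℝ (Fin N)) : ℝ :=
  Real.sqrt (∑ i : Fin N, if (i : ℕ) < K then x i ^ 2 else 0)

/-- Norm of the last `N - K` coordinates of `x ∈ ℝ^N`. -/
noncomputable def coblockNorm (N K : ℕ) (x : EuclideanSpace ℝ (Fin N)) : ℝ :=
  Real.sqrt (∑ i : Fin N, if K ≤ (i : ℕ) then x i ^ 2 else 0)

/-
Coordinate `0` lies in the first `K₁`-block and coordinate `K₁` in the second.
Any `x` has the same `K₁`-block norms `(a, b)` as `q = a e₀ + b e_{K₁}`, so `u x = u q`.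
Since `K₁ < K₂`, both nonzero coordinates of `q` lie in the first `K₂`-block, so the `K₂`-block
norms of `q` are `(|x|, 0)` and `u q = ũ₂ (|x|, 0)`, which depends on `|x|` only.
-/

open Finset EuclideanSpace

section BlockNorm

variable {N : ℕ}

lemma blockNorm_sq (K : ℕ) (x : EuclideanSpace ℝ (Fin N)) :
    blockNorm N K x ^ 2 = ∑ i : Fin N, if (i : ℕ) < K then x i ^ 2 else 0 :=
  Real.sq_sqrt (sum_nonneg fun _ _ => by positivity)

lemma coblockNorm_sq (K : ℕ) (x : EuclideanSpace ℝ (Fin N)) :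
    coblockNorm N K x ^ 2 = ∑ i : Fin N, if K ≤ (i : ℕ) then x i ^ 2 else 0 :=
  Real.sq_sqrt (sum_nonneg fun _ _ => by positivity)

lemma blockNorm_sq_add_coblockNorm_sq (K : ℕ) (x : EuclideanSpace ℝ (Fin N)) :
    blockNorm N K x ^ 2 + coblockNorm N K x ^ 2 = ‖x‖ ^ 2 := by
  rw [blockNorm_sq, coblockNorm_sq, ← sum_add_distrib, EuclideanSpace.norm_sq_eq]
  refine sum_congr rfl fun i _ => ?_
  rw [Real.norm_eq_abs, sq_abs]
  by_cases h : (i : ℕ) < K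
  · simp [h, not_le.mpr h]
  · simp [h, not_lt.mp h]

lemma sum_ite_sq_single_add_single {i j : Fin N} (hij : i ≠ j) (p : Fin N → Prop)
    [DecidablePred p] (a b : ℝ) :
    (∑ k, if p k then (single i a + single j b : EuclideanSpace ℝ (Fin N)) k ^ 2 else 0) =
      (if p i then a ^ 2 else 0) + (if p j then b ^ 2 else 0) := by
  rw [Fintype.sum_eq_add i j hij fun k hk => by simp [hk.1, hk.2]]
  simp [hij, hij.symm]

variable {K : ℕ} {i j : Fin N} {a b : ℝ}

lemma blockNorm_single_add_single_of_lt_of_le (hi : (i : ℕ) < K) (hj : K ≤ (j : ℕ))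
    (ha : 0 ≤ a) : blockNorm N K (single i a + single j b) = a := by
  have hij : i ≠ j := fun h => by subst h; omega
  rw [blockNorm, sum_ite_sq_single_add_single hij (fun k => (k : ℕ) < K), if_pos hi,
    if_neg (not_lt.mpr hj), add_zero, Real.sqrt_sq ha]

lemma coblockNorm_single_add_single_of_lt_of_le (hi : (i : ℕ) < K) (hj : K ≤ (j : ℕ))
    (hb : 0 ≤ b) : coblockNorm N K (single i a + single j b) = b := by
  have hij : i ≠ j := fun h => by subst h; omega
  rw [coblockNorm, sum_ite_sq_single_add_single hij (fun k => K ≤ (k : ℕ)),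
    if_neg (not_le.mpr hi), if_pos hj, zero_add, Real.sqrt_sq hb]

lemma blockNorm_single_add_single_of_lt (hij : i ≠ j) (hi : (i : ℕ) < K) (hj : (j : ℕ) < K) :
    blockNorm N K (single i a + single j b) = √(a ^ 2 + b ^ 2) := by
  rw [blockNorm, sum_ite_sq_single_add_single hij (fun k => (k : ℕ) < K), if_pos hi, if_pos hj]

lemma coblockNorm_single_add_single_of_lt (hij : i ≠ j) (hi : (i : ℕ) < K) (hj : (j : ℕ) < K) :
    coblockNorm N K (single i a + single j b) = 0 := by
  rw [coblockNorm, sum_ite_sq_single_add_single hij (fun k => K ≤ (k : ℕ)),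
    if_neg (not_le.mpr hi), if_neg (not_le.mpr hj), add_zero, Real.sqrt_zero]

end BlockNorm

theorem stmt0_general (N K₁ K₂ : ℕ) (hK₁ : 1 ≤ K₁) (hK : K₁ < K₂) (hK₂ : K₂ ≤ N - 1)
    (u : EuclideanSpace ℝ (Fin N) → ℝ) (u₁ u₂ : ℝ → ℝ → ℝ)
    (h₁ : ∀ x, u x = u₁ (blockNorm N K₁ x) (coblockNorm N K₁ x))
    (h₂ : ∀ x, u x = u₂ (blockNorm N K₂ x) (coblockNorm N K₂ x)) :
    ∀ x x' : EuclideanSpace ℝ (Fin N), ‖x‖ = ‖x'‖ → u x = u x' := by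
  let i₀ : Fin N := ⟨0, by omega⟩
  let i₁ : Fin N := ⟨K₁, by omega⟩
  have hi₀ : (i₀ : ℕ) < K₁ := hK₁
  have hi₀₁ : i₀ ≠ i₁ := Fin.ne_of_val_ne (by simp [i₀, i₁]; omega)
  have radial : ∀ x, u x = u₂ ‖x‖ 0 := fun x => by
    set a := blockNorm N K₁ x
    set b := coblockNorm N K₁ x
    have ha : 0 ≤ a := Real.sqrt_nonneg _
    have hb : 0 ≤ b := Real.sqrt_nonneg _
    have hi₁ : K₁ ≤ (i₁ : ℕ) := le_rfl
    have hnorm : √(a ^ 2 + b ^ 2) = ‖x‖ := by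
      rw [blockNorm_sq_add_coblockNorm_sq, Real.sqrt_sq (norm_nonneg x)]
    calc u x = u₁ a b := h₁ x
      _ = u (single i₀ a + single i₁ b) := by
        rw [h₁, blockNorm_single_add_single_of_lt_of_le hi₀ hi₁ ha,
          coblockNorm_single_add_single_of_lt_of_le hi₀ hi₁ hb]
      _ = u₂ ‖x‖ 0 := by
        rw [h₂, blockNorm_single_add_single_of_lt hi₀₁ (hi₀.trans hK) hK,
          coblockNorm_single_add_single_of_lt hi₀₁ (hi₀.trans hK) hK, hnorm]
  intro x x' hxx'
  rw [radial x, radial x', hxx']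

theorem stmt0 (N K₁ K₂ : ℕ) (hN : 3 ≤ N) (hK₁ : 1 ≤ K₁) (hK : K₁ < K₂) (hK₂ : K₂ ≤ N - 1)
    (u : EuclideanSpace ℝ (Fin N) → ℝ) (u₁ u₂ : ℝ → ℝ → ℝ)
    (h₁ : ∀ x, u x = u₁ (blockNorm N K₁ x) (coblockNorm N K₁ x))
    (h₂ : ∀ x, u x = u₂ (blockNorm N K₂ x) (coblockNorm N K₂ x)) :
    ∀ x x' : EuclideanSpace ℝ (Fin N), ‖x‖ = ‖x'‖ → u x = u x' :=
  stmt0_general N K₁ K₂ hK₁ hK hK₂ u u₁ u₂ h₁ h₂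
end

section
/- Let N ≥ 3, A > 0, 0 < α < 2N−2, and let u ∈ D^{1,2}(ℝ^N) be radial with ∫_{ℝ^N} |x|^{−α}u² dx < ∞. Define ‖u‖_A² = ∫|∇u|² dx + A∫|x|^{−α}u² dx and 2*_α = 2(2N−2+α)/(2N−2−α). If |u(x)| ≤ (2/σ_N)^{1/2} A^{−1/4} ‖u‖_A |x|^{−(2N−2−α)/4} a.e. (the radial decay estimate), then ∫_{ℝ^N} |u|^{2*_α} dx ≤ (2/σ_N)^{2α/(2N−2−α)} A^{−(2N−2)/(2N−2−α)} ‖u‖_A^{2*_α}. -/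
/-!
Write `|u|^{2*_α} = |u|^s u²` with `s = 2*_α - 2 = 4α/(2N-2-α)`. Raising the radial decay bound
`|u(x)| ≤ C |x|^{-(2N-2-α)/4}` to the power `s` gives `|u(x)|^s ≤ C^s |x|^{-α}`, hence
`∫ |u|^{2*_α} ≤ C^s ∫ |x|^{-α} u² ≤ C^s ‖u‖_A² / A`, and the right-hand side is the claimed bound
once the powers of `2/σ_N`, `A` and `‖u‖_A` are collected.
-/

open MeasureTheory

lemma abs_rpow_le_of_abs_le_mul_rpow {a C r t s : ℝ} (hC : 0 ≤ C) (hr : 0 ≤ r) (hs : 0 ≤ s)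
    (h : |a| ≤ C * r ^ t) : |a| ^ s ≤ C ^ s * r ^ (t * s) := by
  calc |a| ^ s ≤ (C * r ^ t) ^ s := Real.rpow_le_rpow (abs_nonneg a) h hs
    _ = C ^ s * r ^ (t * s) := by
      rw [Real.mul_rpow hC (Real.rpow_nonneg hr t), ← Real.rpow_mul hr]

lemma integral_abs_rpow_add_two_le {X : Type*} [MeasurableSpace X] {μ : Measure X}
    {u w : X → ℝ} {s M : ℝ} (hs : 0 ≤ s) (hwu : Integrable (fun x => w x * u x ^ 2) μ)
    (h : ∀ᵐ x ∂μ, |u x| ^ s ≤ M * w x) :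
    ∫ x, |u x| ^ (s + 2) ∂μ ≤ M * ∫ x, w x * u x ^ 2 ∂μ := by
  rw [← integral_const_mul]
  refine integral_mono_of_nonneg (ae_of_all _ fun x => Real.rpow_nonneg (abs_nonneg _) _)
    (hwu.const_mul M) ?_
  filter_upwards [h] with x hx
  calc |u x| ^ (s + 2) = |u x| ^ s * u x ^ 2 := by
        rw [Real.rpow_add' (abs_nonneg _) (by linarith), Real.rpow_two, sq_abs]
    _ ≤ M * w x * u x ^ 2 := mul_le_mul_of_nonneg_right hx (sq_nonneg _)
    _ = M * (w x * u x ^ 2) := mul_assoc _ _ _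

lemma decay_constant_rpow_mul_sq_div {c A n s : ℝ} (hc : 0 ≤ c) (hA : 0 < A) (hn : 0 ≤ n)
    (hs : 0 ≤ s) :
    (c ^ ((1:ℝ) / 2) * A ^ (-(1:ℝ) / 4) * n) ^ s * (n ^ 2 / A)
      = c ^ (s / 2) * A ^ (-(s / 4 + 1)) * n ^ (s + 2) := by
  rw [Real.mul_rpow (by positivity) hn, Real.mul_rpow (by positivity) (by positivity),
    ← Real.rpow_mul hc, ← Real.rpow_mul hA.le, Real.rpow_add' hn (by linarith),
    Real.rpow_neg hA.le, Real.rpow_add hA, Real.rpow_one, Real.rpow_two, div_eq_mul_inv,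
    mul_inv, ← Real.rpow_neg hA.le]
  ring_nf

theorem stmt18_general (N : ℕ) (A α : ℝ) (hA : 0 < A) (hα : 0 < α)
    (hα2 : α < 2 * (N:ℝ) - 2)
    (u : EuclideanSpace ℝ (Fin N) → ℝ)
    (hwt : Integrable (fun x => ‖x‖ ^ (-α) * (u x) ^ 2))
    (normA σN twoStarA : ℝ) (hnorm0 : 0 ≤ normA)
    (hnormA : normA ^ 2 = (∫ x, ‖fderiv ℝ u x‖ ^ 2) + A * ∫ x, ‖x‖ ^ (-α) * (u x) ^ 2)
    (hσ : σN = (N:ℝ) * (volume (Metric.ball (0 : EuclideanSpace ℝ (Fin N)) 1)).toReal)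
    (hts : twoStarA = 2 * (2 * (N:ℝ) - 2 + α) / (2 * (N:ℝ) - 2 - α))
    (hbound : ∀ᵐ x : EuclideanSpace ℝ (Fin N) ∂volume,
      |u x| ≤ (2 / σN) ^ ((1:ℝ) / 2) * A ^ (-(1:ℝ) / 4) * normA * ‖x‖ ^ (-(2 * (N:ℝ) - 2 - α) / 4)) :
    ∫ x, |u x| ^ twoStarA
      ≤ (2 / σN) ^ (2 * α / (2 * (N:ℝ) - 2 - α)) *
          A ^ (-(2 * (N:ℝ) - 2) / (2 * (N:ℝ) - 2 - α)) * normA ^ twoStarA := by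
  set d : ℝ := 2 * (N:ℝ) - 2 - α
  have hd : 0 < d := by linarith
  set s : ℝ := 4 * α / d with hs_def
  have hs : 0 ≤ s := by positivity
  have hσ0 : 0 ≤ 2 / σN := by rw [hσ]; positivity
  set C : ℝ := (2 / σN) ^ ((1:ℝ) / 2) * A ^ (-(1:ℝ) / 4) * normA
  have htwoStar : twoStarA = s + 2 := by rw [hts, hs_def]; field_simp; ring
  have hdecay : ∀ᵐ x ∂volume, |u x| ^ s ≤ C ^ s * ‖x‖ ^ (-α) := by
    filter_upwards [hbound] with x hx
    have hexp : -d / 4 * s = -α := by rw [hs_def]; field_simp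
    simpa only [hexp] using
      abs_rpow_le_of_abs_le_mul_rpow (by positivity) (norm_nonneg x) hs hx
  have hweighted : ∫ x, ‖x‖ ^ (-α) * u x ^ 2 ≤ normA ^ 2 / A := by
    have hgrad0 : 0 ≤ ∫ x, ‖fderiv ℝ u x‖ ^ 2 := integral_nonneg fun x => by positivity
    rw [le_div_iff₀ hA]
    linarith
  calc ∫ x, |u x| ^ twoStarA = ∫ x, |u x| ^ (s + 2) := by rw [htwoStar]
    _ ≤ C ^ s * ∫ x, ‖x‖ ^ (-α) * u x ^ 2 := integral_abs_rpow_add_two_le hs hwt hdecay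
    _ ≤ C ^ s * (normA ^ 2 / A) :=
        mul_le_mul_of_nonneg_left hweighted (Real.rpow_nonneg (by positivity) _)
    _ = (2 / σN) ^ (s / 2) * A ^ (-(s / 4 + 1)) * normA ^ (s + 2) :=
        decay_constant_rpow_mul_sq_div hσ0 hA hnorm0 hs
    _ = _ := by
      rw [htwoStar]
      congr 3 <;> rw [hs_def] <;> field_simp <;> ring

theorem stmt18 (N : ℕ) (hN : 3 ≤ N) (A α : ℝ) (hA : 0 < A) (hα : 0 < α)
    (hα2 : α < 2 * (N:ℝ) - 2)
    (u : EuclideanSpace ℝ (Fin N) → ℝ)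
    (hrad : ∀ x x', ‖x‖ = ‖x'‖ → u x = u x')
    (hD : MemLp u (ENNReal.ofReal (2 * (N:ℝ) / ((N:ℝ) - 2))))
    (hgrad : Integrable (fun x => ‖fderiv ℝ u x‖ ^ 2))
    (hwt : Integrable (fun x => ‖x‖ ^ (-α) * (u x) ^ 2))
    (normA σN twoStarA : ℝ) (hnorm0 : 0 ≤ normA)
    (hnormA : normA ^ 2 = (∫ x, ‖fderiv ℝ u x‖ ^ 2) + A * ∫ x, ‖x‖ ^ (-α) * (u x) ^ 2)
    (hσ : σN = (N:ℝ) * (volume (Metric.ball (0 : EuclideanSpace ℝ (Fin N)) 1)).toReal)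
    (hts : twoStarA = 2 * (2 * (N:ℝ) - 2 + α) / (2 * (N:ℝ) - 2 - α))
    (hbound : ∀ᵐ x : EuclideanSpace ℝ (Fin N) ∂volume,
      |u x| ≤ (2 / σN) ^ ((1:ℝ) / 2) * A ^ (-(1:ℝ) / 4) * normA * ‖x‖ ^ (-(2 * (N:ℝ) - 2 - α) / 4)) :
    ∫ x, |u x| ^ twoStarA
      ≤ (2 / σN) ^ (2 * α / (2 * (N:ℝ) - 2 - α)) *
          A ^ (-(2 * (N:ℝ) - 2) / (2 * (N:ℝ) - 2 - α)) * normA ^ twoStarA :=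
  stmt18_general N A α hA hα hα2 u hwt normA σN twoStarA hnorm0 hnormA hσ hts hbound
end
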